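/- Under the stated setting together with Assumption (Sym), the duality mapping D is a cusco map on the unit sphere S := {b ∈ X : ‖b‖_{X_Q} = 1}: for every b ∈ S the set D(b) is nonempty, convex and compact in the norm topology of (X*, ‖·‖_{X_Q*}), and D is norm-to-norm upper semicontinuous: for every b ∈ S and every norm-open set V ⊆ X* with D(b) ⊆ V there exists δ > 0 such that D(b') ⊆ V whenever b' ∈ S and ‖b' − b‖_{X_Q} < δ. -/

import Mathlib

open NormedSpace Filter Topology

noncomputable section

/-- The setting of Coifman–Lions–Meyer–Semmes-type quadratic operators:
`X` is a real Banach space, `H` a Hilbert space over `𝕜 ∈ {ℝ, ℂ}`,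
`T` is a bilinear map `X** × H → H` satisfying assumption (A1)
(two-sided norm bounds and compactness of `T_b` for `b` in the canonical
image of `X`) and assumption (A2) (`T_b` self-adjoint with norm equal to the
supremum of `⟨T_b f, f⟩` over the unit sphere), together with the quadratic
map `Q : H → X*` determined by `⟨a, Qω⟩ = ⟨T_a ω, ω⟩` for `a ∈ X`, and its
Gâteaux derivative `Q'` determined by `⟨a, Q'_ω γ⟩ = 2 Re ⟨T_a ω, γ⟩`. -/
structure CLMS (𝕜 X H : Type*) [RCLike 𝕜]
    [NormedAddCommGroup X] [NormedSpace ℝ X] [CompleteSpace X]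
    [NormedAddCommGroup H] [InnerProductSpace 𝕜 H] [CompleteSpace H] where
  T : StrongDual ℝ (StrongDual ℝ X) → (H →L[𝕜] H)
  T_add : ∀ (b₁ b₂ : StrongDual ℝ (StrongDual ℝ X)) (ω : H), T (b₁ + b₂) ω = T b₁ ω + T b₂ ω
  T_smul : ∀ (r : ℝ) (b : StrongDual ℝ (StrongDual ℝ X)) (ω : H), T (r • b) ω = (r : 𝕜) • T b ω
  c : ℝ
  C : ℝ
  c_pos : 0 < c
  c_le_C : c ≤ C
  lower : ∀ b : StrongDual ℝ (StrongDual ℝ X), c * ‖b‖ ≤ ‖T b‖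
  upper : ∀ b : StrongDual ℝ (StrongDual ℝ X), ‖T b‖ ≤ C * ‖b‖
  compact : ∀ a : X, IsCompactOperator (T (inclusionInDoubleDual ℝ X a))
  selfAdj : ∀ b : StrongDual ℝ (StrongDual ℝ X), IsSelfAdjoint (T b)
  norm_eq : ∀ b : StrongDual ℝ (StrongDual ℝ X),
    ‖T b‖ = sSup {r : ℝ | ∃ f : H, ‖f‖ = 1 ∧ RCLike.re (inner 𝕜 ((T b) f) f : 𝕜) = r}
  Q : H → StrongDual ℝ X
  hQ : ∀ (a : X) (ω : H),
    Q ω a = RCLike.re (inner 𝕜 ((T (inclusionInDoubleDual ℝ X a)) ω) ω : 𝕜)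
  Q' : H → H → StrongDual ℝ X
  hQ' : ∀ (a : X) (ω γ : H),
    Q' ω γ a = 2 * RCLike.re (inner 𝕜 ((T (inclusionInDoubleDual ℝ X a)) ω) γ : 𝕜)

namespace CLMS

variable {𝕜 X H : Type*} [RCLike 𝕜]
    [NormedAddCommGroup X] [NormedSpace ℝ X] [CompleteSpace X]
    [NormedAddCommGroup H] [InnerProductSpace 𝕜 H] [CompleteSpace H]

/-- The equivalent norm `‖b‖_{X_Q} := ‖T_b‖` on `X`. -/
def normQ (S : CLMS 𝕜 X H) (b : X) : ℝ := ‖S.T (inclusionInDoubleDual ℝ X b)‖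

/-- The dual norm `‖f‖_{X_Q*} := sup {⟨b, f⟩ : b ∈ X, ‖b‖_{X_Q} ≤ 1}` on `X*`. -/
def dualNormQ (S : CLMS 𝕜 X H) (f : StrongDual ℝ X) : ℝ :=
  sSup {r : ℝ | ∃ b : X, S.normQ b ≤ 1 ∧ f b = r}

/-- The set `𝒜 = {ω ∈ H : ‖ω‖ = 1, ‖Qω‖_{X_Q*} = 1}`. -/
def A (S : CLMS 𝕜 X H) : Set H := {ω : H | ‖ω‖ = 1 ∧ S.dualNormQ (S.Q ω) = 1}

/-- The duality mapping `D(b) = {h ∈ X* : ‖h‖_{X_Q*} = 1, ⟨b, h⟩ = 1}`. -/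
def D (S : CLMS 𝕜 X H) (b : X) : Set (StrongDual ℝ X) :=
  {h : StrongDual ℝ X | S.dualNormQ h = 1 ∧ h b = 1}

/-- `ω` is a minimum norm solution (of `Qγ = Qω`). -/
def MinNormSol (S : CLMS 𝕜 X H) (ω : H) : Prop :=
  ∀ γ : H, S.Q γ = S.Q ω → ‖ω‖ ≤ ‖γ‖

/-- Assumption (Sym): if `ω, γ ∈ 𝒜` have `Qω = Qγ`, then `Q'_ω (c γ) ≠ 0`
for some unimodular `c ∈ 𝕜`. -/
def Sym (S : CLMS 𝕜 X H) : Prop :=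
  ∀ ω ∈ S.A, ∀ γ ∈ S.A, S.Q ω = S.Q γ → ∃ c : 𝕜, ‖c‖ = 1 ∧ S.Q' ω (c • γ) ≠ 0

/-- Assumption (A3): the canonical pairing of `b ∈ X**` with `Qω ∈ X*`
equals `⟨T_b ω, ω⟩`. -/
def A3 (S : CLMS 𝕜 X H) : Prop :=
  ∀ (b : StrongDual ℝ (StrongDual ℝ X)) (ω : H), b (S.Q ω) = RCLike.re (inner 𝕜 ((S.T b) ω) ω : 𝕜)

end CLMS


/-!
For `‖b‖ = 1` let `M_b` be the set of unit vectors fixed by `T_b`. Since `T_b` is compact and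
`sup_{‖f‖ = 1} Re ⟨T_b f, f⟩ = ‖T_b‖ = 1`, the set `M_b` is nonempty and compact, and `Q` maps it
into `D(b)`. Conversely, replacing `b` by the normalisation of `b + t a` and letting `t → 0⁺`
shows that every `h ∈ D(b)` satisfies `⟨a, h⟩ ≤ ⟨a, Qω⟩` for some `ω ∈ M_b`. The closed convex
hull of the compact set `Q(M_b)` is weak-* compact and weak-* continuous functionals are points
of `X`, so Hahn–Banach gives `D(b) = closure (conv Q(M_b))`; in particular `D(b)` is convex and
compact. Upper semicontinuity comes from the closed graph of `b ↦ M_b`: unit vectors fixed by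
`T_{b_n}` with `b_n → b` have a subsequence converging in `M_b`, again by compactness of `T_b`.
-/

theorem NormedSpace.norm_inclusionInDoubleDual {𝕜 E : Type*} [RCLike 𝕜] [NormedAddCommGroup E]
    [NormedSpace 𝕜 E] (x : E) : ‖inclusionInDoubleDual 𝕜 E x‖ = ‖x‖ :=
  (inclusionInDoubleDualLi 𝕜).norm_map x

theorem IsCompact.closure_convexHull {E : Type*} [AddCommGroup E] [Module ℝ E] [UniformSpace E]
    [IsUniformAddGroup E] [LocallyConvexSpace ℝ E] [ContinuousSMul ℝ E] [CompleteSpace E]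
    {K : Set E} (hK : IsCompact K) : IsCompact (closure (convexHull ℝ K)) :=
  hK.totallyBounded.convexHull.closure.isCompact_of_isClosed isClosed_closure

theorem StrongDual.exists_apply_lt_of_notMem_closure_convexHull {E : Type*}
    [NormedAddCommGroup E] [NormedSpace ℝ E] {K : Set (StrongDual ℝ E)} (hK : IsCompact K)
    {h : StrongDual ℝ E} (hh : h ∉ closure (convexHull ℝ K)) : ∃ a : E, ∀ k ∈ K, k a < h a := by
  have : LocallyConvexSpace ℝ (WeakDual ℝ E) := WeakBilin.locallyConvexSpace
  obtain ⟨f, u, v, hfK, huv, hfh⟩ := geometric_hahn_banach_compact_closed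
    ((convex_convexHull ℝ K).closure.linear_image StrongDual.toWeakDual.toLinearMap)
    (hK.closure_convexHull.image Dual.toWeakDual_continuous)
    (convex_singleton (StrongDual.toWeakDual h)) isClosed_singleton
    (Set.disjoint_singleton_right.2 fun ⟨k, hk, hkh⟩ =>
      hh (StrongDual.toWeakDual.injective hkh ▸ hk))
  -- weak-* continuous functionals on `E*` are evaluations at points of `E`
  obtain ⟨a, rfl⟩ := LinearMap.dualEmbedding_surjective _ f
  exact ⟨a, fun k hk =>
    ((hfK _ ⟨k, subset_closure (subset_convexHull ℝ K hk), rfl⟩).trans huv).trans (hfh _ rfl)⟩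

section CompactOperator

variable {𝕜 E : Type*} [NontriviallyNormedField 𝕜] [NormedAddCommGroup E] [NormedSpace 𝕜 E]
  {T : E →L[𝕜] E}

theorem IsCompactOperator.exists_fixedPoint_subseq_tendsto (hT : IsCompactOperator T)
    {ω : ℕ → E} {R : ℝ} (hω : ∀ n, ‖ω n‖ ≤ R)
    (h : Tendsto (fun n => T (ω n) - ω n) atTop (𝓝 0)) :
    ∃ y, T y = y ∧ ∃ φ : ℕ → ℕ, StrictMono φ ∧ Tendsto (ω ∘ φ) atTop (𝓝 y) := by
  obtain ⟨y, -, φ, hφ, hTy⟩ := (hT.isCompact_closure_image_closedBall R).tendsto_subseq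
    fun n => subset_closure ⟨ω n, mem_closedBall_zero_iff.2 (hω n), rfl⟩
  have hy : Tendsto (ω ∘ φ) atTop (𝓝 y) := by
    simpa [Function.comp_def] using hTy.sub (h.comp hφ.tendsto_atTop)
  exact ⟨y, tendsto_nhds_unique ((T.continuous.tendsto y).comp hy) hTy, φ, hφ, hy⟩

theorem IsCompactOperator.isCompact_setOf_norm_eq_one_and_apply_eq (hT : IsCompactOperator T) :
    IsCompact {x : E | ‖x‖ = 1 ∧ T x = x} :=
  (hT.isCompact_closure_image_closedBall 1).of_isClosed_subset
    ((isClosed_eq continuous_norm continuous_const).inter (isClosed_eq T.continuous continuous_id))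
    fun x hx => subset_closure ⟨x, mem_closedBall_zero_iff.2 hx.1.le, hx.2⟩

end CompactOperator

section InnerProduct

variable {𝕜 H : Type*} [RCLike 𝕜] [NormedAddCommGroup H] [InnerProductSpace 𝕜 H]
  {T : H →L[𝕜] H}

theorem norm_apply_sub_self_sq_le (hT : ‖T‖ ≤ 1) {f : H} (hf : ‖f‖ = 1) :
    ‖T f - f‖ ^ 2 ≤ 2 * (1 - RCLike.re (inner 𝕜 (T f) f)) := by
  have hTf : ‖T f‖ ≤ 1 := by simpa [hf] using T.le_of_opNorm_le hT f
  rw [norm_sub_sq (𝕜 := 𝕜), hf]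
  nlinarith [norm_nonneg (T f)]

theorem exists_norm_eq_one_apply_sub_self_le (hT : ‖T‖ ≤ 1)
    (hsup : sSup {r : ℝ | ∃ f : H, ‖f‖ = 1 ∧ RCLike.re (inner 𝕜 (T f) f) = r} = 1)
    {ε : ℝ} (hε : 0 < ε) : ∃ f : H, ‖f‖ = 1 ∧ ‖T f - f‖ ≤ ε := by
  have hne : {r : ℝ | ∃ f : H, ‖f‖ = 1 ∧ RCLike.re (inner 𝕜 (T f) f) = r}.Nonempty := by
    by_contra hempty
    rw [Set.not_nonempty_iff_eq_empty.1 hempty, Real.sSup_empty] at hsup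
    exact zero_ne_one hsup
  obtain ⟨_, ⟨f, hf, rfl⟩, hlt⟩ :=
    exists_lt_of_lt_csSup hne (hsup ▸ sub_lt_self 1 (by positivity : 0 < ε ^ 2 / 2))
  refine ⟨f, hf, (pow_le_pow_iff_left₀ (norm_nonneg _) hε.le two_ne_zero).1 ?_⟩
  linarith [norm_apply_sub_self_sq_le hT hf]

theorem IsCompactOperator.exists_norm_eq_one_apply_eq (hT : IsCompactOperator T) (hT1 : ‖T‖ ≤ 1)
    (hsup : sSup {r : ℝ | ∃ f : H, ‖f‖ = 1 ∧ RCLike.re (inner 𝕜 (T f) f) = r} = 1) :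
    ∃ ω : H, ‖ω‖ = 1 ∧ T ω = ω := by
  choose f hf hTf using fun n : ℕ =>
    exists_norm_eq_one_apply_sub_self_le hT1 hsup (Nat.one_div_pos_of_nat (n := n))
  obtain ⟨y, hy, φ, -, hfy⟩ := hT.exists_fixedPoint_subseq_tendsto (fun n => (hf n).le)
    (squeeze_zero_norm hTf tendsto_one_div_add_atTop_nhds_zero_nat)
  exact ⟨y, tendsto_nhds_unique hfy.norm (by simp [hf]), hy⟩

end InnerProduct

namespace CLMS

variable {𝕜 X H : Type*} [RCLike 𝕜]
    [NormedAddCommGroup X] [NormedSpace ℝ X] [CompleteSpace X]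
    [NormedAddCommGroup H] [InnerProductSpace 𝕜 H] [CompleteSpace H]
    (S : CLMS 𝕜 X H) {b : X}

def TX : X →+ (H →L[𝕜] H) :=
  AddMonoidHom.mk' (fun a => S.T (inclusionInDoubleDual ℝ X a)) fun a a' => by
    ext ω
    simp [S.T_add]

theorem TX_smul (r : ℝ) (a : X) : S.TX (r • a) = (r : 𝕜) • S.TX a := by
  ext ω
  simp [TX, S.T_smul]

theorem normQ_eq (a : X) : S.normQ a = ‖S.TX a‖ := rfl

theorem normQ_nonneg (a : X) : 0 ≤ S.normQ a := norm_nonneg _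

theorem mul_norm_le_normQ (a : X) : S.c * ‖a‖ ≤ S.normQ a :=
  norm_inclusionInDoubleDual (𝕜 := ℝ) a ▸ S.lower (inclusionInDoubleDual ℝ X a)

theorem normQ_le_mul_norm (a : X) : S.normQ a ≤ S.C * ‖a‖ :=
  norm_inclusionInDoubleDual (𝕜 := ℝ) a ▸ S.upper (inclusionInDoubleDual ℝ X a)

theorem normQ_zero : S.normQ 0 = 0 := by
  rw [normQ_eq, map_zero, norm_zero]

theorem continuous_normQ : Continuous S.normQ :=
  (AddMonoidHomClass.continuous_of_bound S.TX S.C S.normQ_le_mul_norm).norm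

theorem normQ_smul (r : ℝ) (a : X) : S.normQ (r • a) = |r| * S.normQ a := by
  rw [normQ_eq, TX_smul, norm_smul, RCLike.norm_ofReal, normQ_eq]

theorem normQ_neg (a : X) : S.normQ (-a) = S.normQ a := by
  rw [normQ_eq, map_neg, norm_neg, normQ_eq]

theorem normQ_add_le (a a' : X) : S.normQ (a + a') ≤ S.normQ a + S.normQ a' := by
  simpa only [normQ_eq, map_add] using norm_add_le _ _

theorem bddAbove_setOf_apply (f : StrongDual ℝ X) :
    BddAbove {r : ℝ | ∃ b : X, S.normQ b ≤ 1 ∧ f b = r} := by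
  refine ⟨‖f‖ / S.c, ?_⟩
  rintro _ ⟨b, hb, rfl⟩
  have hb' : ‖b‖ ≤ 1 / S.c := by
    rw [le_div_iff₀ S.c_pos]
    linarith [S.mul_norm_le_normQ b]
  calc f b ≤ ‖f‖ * ‖b‖ := (le_abs_self _).trans (f.le_opNorm b)
    _ ≤ ‖f‖ * (1 / S.c) := by gcongr
    _ = ‖f‖ / S.c := by ring

theorem le_dualNormQ {f : StrongDual ℝ X} {b : X} (hb : S.normQ b ≤ 1) : f b ≤ S.dualNormQ f :=
  le_csSup (S.bddAbove_setOf_apply f) ⟨b, hb, rfl⟩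

theorem dualNormQ_le {f : StrongDual ℝ X} {r : ℝ} (h : ∀ b : X, S.normQ b ≤ 1 → f b ≤ r) :
    S.dualNormQ f ≤ r :=
  csSup_le ⟨0, 0, S.normQ_zero.trans_le zero_le_one, map_zero f⟩ fun _ ⟨b, hb, hfb⟩ => hfb ▸ h b hb

theorem apply_le_dualNormQ_mul (f : StrongDual ℝ X) (b : X) :
    f b ≤ S.dualNormQ f * S.normQ b := by
  rcases (S.normQ_nonneg b).eq_or_lt with h0 | hpos
  · have hb : ‖b‖ ≤ 0 :=
      le_of_mul_le_mul_left (by simpa [← h0] using S.mul_norm_le_normQ b) S.c_pos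
    rw [norm_le_zero_iff.1 hb, map_zero, normQ_zero, mul_zero]
  · have hunit : S.normQ ((S.normQ b)⁻¹ • b) ≤ 1 := by
      rw [normQ_smul, abs_of_pos (inv_pos.2 hpos), inv_mul_cancel₀ hpos.ne']
    have := S.le_dualNormQ (f := f) hunit
    rw [map_smul, smul_eq_mul, inv_mul_le_iff₀ hpos] at this
    linarith

theorem D_eq_inter (hb : S.normQ b = 1) :
    S.D b = (⋂ a ∈ {a : X | S.normQ a ≤ 1}, {h | h a ≤ 1}) ∩ {h | h b = 1} := by
  ext h
  simp only [D, Set.mem_inter_iff, Set.mem_iInter]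
  constructor
  · rintro ⟨hnorm, hhb⟩
    exact ⟨fun a ha => hnorm ▸ S.le_dualNormQ ha, hhb⟩
  · rintro ⟨hle, hhb⟩
    exact ⟨le_antisymm (S.dualNormQ_le hle) (hhb ▸ S.le_dualNormQ hb.le), hhb⟩

theorem isClosed_D (hb : S.normQ b = 1) : IsClosed (S.D b) := by
  rw [S.D_eq_inter hb]
  exact (isClosed_biInter fun a _ => isClosed_le (continuous_eval_const a) continuous_const).inter
    (isClosed_eq (continuous_eval_const b) continuous_const)

theorem convex_D (hb : S.normQ b = 1) : Convex ℝ (S.D b) := by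
  rw [S.D_eq_inter hb]
  exact (convex_iInter₂ fun a _ =>
    convex_halfSpace_le (ContinuousLinearMap.apply ℝ ℝ a).toLinearMap.isLinear 1).inter
    (convex_hyperplane (ContinuousLinearMap.apply ℝ ℝ b).toLinearMap.isLinear 1)

theorem Q_apply (ω : H) (a : X) : S.Q ω a = RCLike.re (inner 𝕜 (S.TX a ω) ω) := S.hQ a ω

theorem Q_apply_le (ω : H) (a : X) : S.Q ω a ≤ ‖ω‖ ^ 2 * S.normQ a :=
  calc S.Q ω a ≤ ‖S.TX a ω‖ * ‖ω‖ := (S.Q_apply ω a).trans_le (re_inner_le_norm _ _)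
    _ ≤ S.normQ a * ‖ω‖ * ‖ω‖ := by gcongr; exact (S.TX a).le_opNorm ω
    _ = ‖ω‖ ^ 2 * S.normQ a := by ring

theorem dualNormQ_Q_le (ω : H) : S.dualNormQ (S.Q ω) ≤ ‖ω‖ ^ 2 :=
  S.dualNormQ_le fun a ha =>
    (S.Q_apply_le ω a).trans (mul_le_of_le_one_right (by positivity) ha)

theorem norm_Q_sub_Q_le (ω γ : H) :
    ‖S.Q ω - S.Q γ‖ ≤ S.C * (‖ω‖ + ‖γ‖) * ‖ω - γ‖ := by
  have hC : 0 ≤ S.C := S.c_pos.le.trans S.c_le_C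
  refine ContinuousLinearMap.opNorm_le_bound _ (by positivity) fun a => ?_
  have hsplit : S.Q ω a - S.Q γ a =
      RCLike.re (inner 𝕜 (S.TX a (ω - γ)) ω) + RCLike.re (inner 𝕜 (S.TX a γ) (ω - γ)) := by
    simp only [Q_apply, map_sub, inner_sub_left, inner_sub_right]
    ring
  have habs (u v : H) : |RCLike.re (inner 𝕜 u v)| ≤ ‖u‖ * ‖v‖ :=
    (RCLike.abs_re_le_norm _).trans (norm_inner_le_norm u v)
  rw [sub_apply, Real.norm_eq_abs, hsplit]
  calc _ ≤ ‖S.TX a (ω - γ)‖ * ‖ω‖ + ‖S.TX a γ‖ * ‖ω - γ‖ :=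
        (abs_add_le _ _).trans (add_le_add (habs _ _) (habs _ _))
    _ ≤ S.normQ a * ‖ω - γ‖ * ‖ω‖ + S.normQ a * ‖γ‖ * ‖ω - γ‖ := by
        gcongr <;> exact (S.TX a).le_opNorm _
    _ ≤ S.C * ‖a‖ * ‖ω - γ‖ * ‖ω‖ + S.C * ‖a‖ * ‖γ‖ * ‖ω - γ‖ := by
        gcongr <;> exact S.normQ_le_mul_norm a
    _ = S.C * (‖ω‖ + ‖γ‖) * ‖ω - γ‖ * ‖a‖ := by ring

theorem continuous_Q : Continuous S.Q := by
  refine continuous_iff_continuousAt.2 fun γ => tendsto_iff_norm_sub_tendsto_zero.2 ?_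
  refine squeeze_zero (fun _ => norm_nonneg _) (fun ω => S.norm_Q_sub_Q_le ω γ) ?_
  have hlim : Tendsto (fun ω : H => S.C * (‖ω‖ + ‖γ‖) * ‖ω - γ‖) (𝓝 γ)
      (𝓝 (S.C * (‖γ‖ + ‖γ‖) * ‖γ - γ‖)) :=
    (by fun_prop : Continuous fun ω : H => S.C * (‖ω‖ + ‖γ‖) * ‖ω - γ‖).tendsto γ
  simpa using hlim

def unitFixedPoints (b : X) : Set H := {ω | ‖ω‖ = 1 ∧ S.TX b ω = ω}

theorem isCompact_unitFixedPoints (b : X) : IsCompact (S.unitFixedPoints b) :=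
  (S.compact b).isCompact_setOf_norm_eq_one_and_apply_eq

theorem unitFixedPoints_nonempty (hb : S.normQ b = 1) : (S.unitFixedPoints b).Nonempty :=
  (S.compact b).exists_norm_eq_one_apply_eq hb.le ((S.norm_eq _).symm.trans hb)

theorem Q_apply_self_eq_one {ω : H} (hω : ω ∈ S.unitFixedPoints b) : S.Q ω b = 1 := by
  rw [Q_apply, hω.2, inner_self_eq_norm_sq, hω.1, one_pow]

theorem Q_mem_D (hb : S.normQ b = 1) {ω : H} (hω : ω ∈ S.unitFixedPoints b) : S.Q ω ∈ S.D b :=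
  ⟨le_antisymm ((S.dualNormQ_Q_le ω).trans_eq (by rw [hω.1, one_pow]))
    (S.Q_apply_self_eq_one hω ▸ S.le_dualNormQ hb.le), S.Q_apply_self_eq_one hω⟩

theorem norm_TX_apply_sub_self_le {b' : X} {ω : H} (hω : ω ∈ S.unitFixedPoints b') :
    ‖S.TX b ω - ω‖ ≤ S.normQ (b' - b) :=
  calc ‖S.TX b ω - ω‖ = ‖S.TX (b' - b) ω‖ := by
        rw [map_sub, sub_apply, hω.2, norm_sub_rev]
    _ ≤ S.normQ (b' - b) * ‖ω‖ := (S.TX (b' - b)).le_opNorm ω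
    _ = S.normQ (b' - b) := by rw [hω.1, mul_one]

theorem exists_subseq_tendsto_mem_unitFixedPoints {b' : ℕ → X} {ω : ℕ → H}
    (hb' : Tendsto (fun n => S.normQ (b' n - b)) atTop (𝓝 0))
    (hω : ∀ n, ω n ∈ S.unitFixedPoints (b' n)) :
    ∃ y ∈ S.unitFixedPoints b, ∃ φ : ℕ → ℕ, StrictMono φ ∧ Tendsto (ω ∘ φ) atTop (𝓝 y) := by
  obtain ⟨y, hy, φ, hφ, hωy⟩ := (S.compact b).exists_fixedPoint_subseq_tendsto
    (fun n => (hω n).1.le) (squeeze_zero_norm (fun n => S.norm_TX_apply_sub_self_le (hω n)) hb')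
  exact ⟨y, ⟨tendsto_nhds_unique hωy.norm (by simp [fun n => (hω n).1]), hy⟩, φ, hφ, hωy⟩

theorem apply_le_Q_apply_of_mem_unitFixedPoints {a : X} {h : StrongDual ℝ X} {t : ℝ} {ω : H}
    (hb : S.normQ b = 1) (hh : h ∈ S.D b) (ht : 0 < t) (hr : 0 < S.normQ (b + t • a))
    (hω : ω ∈ S.unitFixedPoints ((S.normQ (b + t • a))⁻¹ • (b + t • a))) : h a ≤ S.Q ω a := by
  have hQr : S.Q ω b + t * S.Q ω a = S.normQ (b + t • a) := by
    have h1 := S.Q_apply_self_eq_one hω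
    rw [map_smul, smul_eq_mul, inv_mul_eq_one₀ hr.ne', map_add, map_smul, smul_eq_mul] at h1
    exact h1.symm
  have hQb : S.Q ω b ≤ 1 := by
    simpa [hω.1, hb] using S.Q_apply_le ω b
  have hhr : 1 + t * h a ≤ S.normQ (b + t • a) := by
    simpa [hh.1, hh.2] using S.apply_le_dualNormQ_mul h (b + t • a)
  exact le_of_mul_le_mul_left (by linarith) ht

theorem sub_abs_mul_normQ_le_normQ_add_smul (a : X) (t : ℝ) :
    S.normQ b - |t| * S.normQ a ≤ S.normQ (b + t • a) := by
  have h := S.normQ_add_le (b + t • a) (-(t • a))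
  rw [add_neg_cancel_right, normQ_neg, normQ_smul] at h
  linarith

theorem tendsto_normQ_normalize_add_smul_sub (hb : S.normQ b = 1) (a : X) {t : ℕ → ℝ}
    (ht : Tendsto t atTop (𝓝 0)) :
    Tendsto (fun n => S.normQ ((S.normQ (b + t n • a))⁻¹ • (b + t n • a) - b)) atTop (𝓝 0) := by
  have hlin : Tendsto (fun n => b + t n • a) atTop (𝓝 b) := by
    simpa using tendsto_const_nhds.add (ht.smul_const a)
  have hnorm : Tendsto (fun n => S.normQ (b + t n • a)) atTop (𝓝 1) :=
    hb ▸ (S.continuous_normQ.tendsto b).comp hlin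
  have hnormalize : Tendsto (fun n => (S.normQ (b + t n • a))⁻¹ • (b + t n • a)) atTop (𝓝 b) := by
    simpa only [inv_one, one_smul] using (hnorm.inv₀ one_ne_zero).smul hlin
  simpa only [sub_self, normQ_zero, Function.comp_def] using
    (S.continuous_normQ.tendsto _).comp (hnormalize.sub_const b)

theorem exists_mem_unitFixedPoints_apply_le (hb : S.normQ b = 1) {h : StrongDual ℝ X}
    (hh : h ∈ S.D b) (a : X) : ∃ ω ∈ S.unitFixedPoints b, h a ≤ S.Q ω a := by
  -- `t n * normQ a < 1` keeps `b + t n • a` away from `0`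
  set t : ℕ → ℝ := fun n => (n + 1 + S.normQ a)⁻¹
  have ha := S.normQ_nonneg a
  have ht : ∀ n, 0 < t n := fun n => by positivity
  have hr : ∀ n, 0 < S.normQ (b + t n • a) := fun n => by
    have h1 : t n * S.normQ a < 1 := by
      rw [inv_mul_lt_iff₀ (by positivity)]
      linarith
    have h2 := S.sub_abs_mul_normQ_le_normQ_add_smul (b := b) a (t n)
    rw [hb, abs_of_pos (ht n)] at h2
    linarith
  have hunit : ∀ n, S.normQ ((S.normQ (b + t n • a))⁻¹ • (b + t n • a)) = 1 := fun n => by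
    rw [normQ_smul, abs_of_pos (inv_pos.2 (hr n)), inv_mul_cancel₀ (hr n).ne']
  choose ω hω using fun n => S.unitFixedPoints_nonempty (hunit n)
  have htt : Tendsto t atTop (𝓝 0) := tendsto_inv_atTop_zero.comp
    (tendsto_atTop_add_const_right _ _ (tendsto_atTop_add_const_right _ _
      tendsto_natCast_atTop_atTop))
  obtain ⟨y, hy, φ, -, hωy⟩ := S.exists_subseq_tendsto_mem_unitFixedPoints
    (S.tendsto_normQ_normalize_add_smul_sub hb a htt) hω
  refine ⟨y, hy, ge_of_tendsto' (((continuous_eval_const a).tendsto _).comp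
    ((S.continuous_Q.tendsto y).comp hωy)) fun n => ?_⟩
  exact S.apply_le_Q_apply_of_mem_unitFixedPoints hb hh (ht _) (hr _) (hω _)

theorem image_Q_subset_D (hb : S.normQ b = 1) : S.Q '' S.unitFixedPoints b ⊆ S.D b := by
  rintro _ ⟨ω, hω, rfl⟩
  exact S.Q_mem_D hb hω

theorem D_eq_closure_convexHull (hb : S.normQ b = 1) :
    S.D b = closure (convexHull ℝ (S.Q '' S.unitFixedPoints b)) := by
  refine subset_antisymm (fun h hh => ?_)
    (closure_minimal (convexHull_min (S.image_Q_subset_D hb) (S.convex_D hb)) (S.isClosed_D hb))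
  by_contra hnot
  obtain ⟨a, ha⟩ := StrongDual.exists_apply_lt_of_notMem_closure_convexHull
    ((S.isCompact_unitFixedPoints b).image S.continuous_Q) hnot
  obtain ⟨ω, hω, hle⟩ := S.exists_mem_unitFixedPoints_apply_le hb hh a
  exact (ha _ ⟨ω, hω, rfl⟩).not_ge hle

theorem isCompact_D (hb : S.normQ b = 1) : IsCompact (S.D b) :=
  S.D_eq_closure_convexHull hb ▸
    ((S.isCompact_unitFixedPoints b).image S.continuous_Q).closure_convexHull

theorem D_nonempty (hb : S.normQ b = 1) : (S.D b).Nonempty :=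
  let ⟨ω, hω⟩ := S.unitFixedPoints_nonempty hb
  ⟨S.Q ω, S.Q_mem_D hb hω⟩

theorem exists_image_Q_subset_of_isOpen {U : Set (StrongDual ℝ X)} (hU : IsOpen U)
    (hbU : S.Q '' S.unitFixedPoints b ⊆ U) :
    ∃ δ > 0, ∀ b' : X, S.normQ (b' - b) < δ → S.Q '' S.unitFixedPoints b' ⊆ U := by
  by_contra! hcon
  choose b' hb' hsub using fun n : ℕ => hcon (1 / (n + 1)) Nat.one_div_pos_of_nat
  choose ω hω hωU using fun n => Set.not_subset.1 (mt Set.image_subset_iff.2 (hsub n))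
  obtain ⟨y, hy, φ, -, hωy⟩ := S.exists_subseq_tendsto_mem_unitFixedPoints
    (squeeze_zero (fun n => S.normQ_nonneg _) (fun n => (hb' n).le)
      tendsto_one_div_add_atTop_nhds_zero_nat) hω
  obtain ⟨n, hn⟩ := (((S.continuous_Q.tendsto y).comp hωy).eventually
    (hU.mem_nhds (hbU ⟨y, hy, rfl⟩))).exists
  exact hωU (φ n) hn

theorem exists_D_subset_of_isOpen (hb : S.normQ b = 1) {V : Set (StrongDual ℝ X)}
    (hV : IsOpen V) (hDV : S.D b ⊆ V) :
    ∃ δ > 0, ∀ b' : X, S.normQ b' = 1 → S.normQ (b' - b) < δ → S.D b' ⊆ V := by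
  obtain ⟨ε, hε, hεV⟩ := (S.isCompact_D hb).exists_cthickening_subset_open hV hDV
  obtain ⟨δ, hδ, hQ⟩ := S.exists_image_Q_subset_of_isOpen Metric.isOpen_thickening
    ((S.image_Q_subset_D hb).trans (Metric.self_subset_thickening hε _))
  refine ⟨δ, hδ, fun b' hb' hbb' => ?_⟩
  rw [S.D_eq_closure_convexHull hb']
  refine (closure_minimal ?_ Metric.isClosed_cthickening).trans hεV
  exact (convexHull_min (hQ b' hbb') ((S.convex_D hb).thickening ε)).trans
    (Metric.thickening_subset_cthickening ε _)

end CLMS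

theorem stmt_19_general {𝕜 X H : Type*} [RCLike 𝕜]
    [NormedAddCommGroup X] [NormedSpace ℝ X] [CompleteSpace X]
    [NormedAddCommGroup H] [InnerProductSpace 𝕜 H] [CompleteSpace H]
    (S : CLMS 𝕜 X H) :
    ∀ b : X, S.normQ b = 1 →
      (S.D b).Nonempty ∧ Convex ℝ (S.D b) ∧ IsCompact (S.D b) ∧
      ∀ V : Set (StrongDual ℝ X), IsOpen V → S.D b ⊆ V →
        ∃ δ > 0, ∀ b' : X, S.normQ b' = 1 → S.normQ (b' - b) < δ →
          S.D b' ⊆ V :=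
  fun _ hb => ⟨S.D_nonempty hb, S.convex_D hb, S.isCompact_D hb,
    fun _ hV hDV => S.exists_D_subset_of_isOpen hb hV hDV⟩

/-- under (Sym), the duality mapping `D` is a cusco map on the
unit sphere of `(X, ‖·‖_{X_Q})`: nonempty convex compact values and
norm-to-norm upper semicontinuity. -/
theorem stmt_19 {𝕜 X H : Type*} [RCLike 𝕜]
    [NormedAddCommGroup X] [NormedSpace ℝ X] [CompleteSpace X]
    [TopologicalSpace.SeparableSpace (StrongDual ℝ X)]
    [NormedAddCommGroup H] [InnerProductSpace 𝕜 H] [CompleteSpace H]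
    (S : CLMS 𝕜 X H) (hSym : S.Sym) :
    ∀ b : X, S.normQ b = 1 →
      (S.D b).Nonempty ∧ Convex ℝ (S.D b) ∧ IsCompact (S.D b) ∧
      ∀ V : Set (StrongDual ℝ X), IsOpen V → S.D b ⊆ V →
        ∃ δ > 0, ∀ b' : X, S.normQ b' = 1 → S.normQ (b' - b) < δ →
          S.D b' ⊆ V :=
  stmt_19_general S
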